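/- Let Λ be a commutative ring, V a finite free Λ-module with dual V*. Suppose M is a Λ-module with actions of the exterior algebras Λ^*(V) and Λ^*(V*) which are compatible in the sense that v·v*·m + v*·v·m = ⟨v, v*⟩·m for all v ∈ V, v* ∈ V*, m ∈ M (i.e. M is a module over the Clifford/Weyl-type algebra generated by V and V* with these relations). If M is free of rank one over Λ^*(V*) generated by an element m₀ annihilated by V (i.e. v·m₀ = 0 for all v ∈ V), then M is also free of rank one over Λ^*(V), generated by the element (v*₁∧…∧v*_δ)·m₀ for any basis v*₁,…,v*_δ of V*. -/

import Mathlib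

/-!
Put `ω = v*₁ ∧ … ∧ v*_δ` and `x₀ = ω · m₀`. Every `φ ∈ V*` kills `x₀`, because `φ ∧ ω = 0`;
the anticommutation relations then make the `⋀*(V)`-orbit of `x₀` stable under `⋀*(V*)`.
Applying the dual basis `v_δ ⋯ v_1` to `x₀` returns `m₀`, so the orbit contains the generator
`m₀` and is all of `M`. Thus `r ↦ r · x₀` is a surjection between free `Λ`-modules of the same
finite rank `2^δ`, hence bijective (Vasconcelos / Orzech).
-/

open ExteriorAlgebra Module

theorem ExteriorAlgebra.ι_mul_ιMulti_eq_zero_of_span_eq_top {Λ W : Type*} [CommRing Λ]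
    [AddCommGroup W] [Module Λ W] {n : ℕ} {v : Fin n → W}
    (hv : Submodule.span Λ (Set.range v) = ⊤) (w : W) :
    ι Λ w * ιMulti Λ n v = 0 := by
  have hw : w ∈ Submodule.span Λ (Set.range v) := hv ▸ Submodule.mem_top
  induction hw using Submodule.span_induction with
  | mem _ hw =>
      obtain ⟨i, rfl⟩ := hw
      have hcons : ι Λ (v i) * ιMulti Λ n v = ιMulti Λ (n + 1) (Fin.cons (v i) v) := by
        rw [ιMulti_succ_apply]; rfl
      rw [hcons]
      exact AlternatingMap.map_eq_zero_of_eq _ _ (i := 0) (j := i.succ) (by simp)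
        (Fin.succ_ne_zero i).symm
  | zero => rw [map_zero, zero_mul]
  | add _ _ _ _ h₁ h₂ => rw [map_add, add_mul, h₁, h₂, add_zero]
  | smul c _ _ h => rw [map_smul, smul_mul_assoc, h, smul_zero]

theorem Module.Basis.apply_dualBasis_map_evalEquiv_symm {Λ V ι : Type*} [CommSemiring Λ]
    [AddCommMonoid V] [Module Λ V] [IsReflexive Λ V] [DecidableEq ι] [Finite ι]
    (b : Basis ι Λ (Dual Λ V)) (i j : ι) :
    b i (b.dualBasis.map (evalEquiv Λ V).symm j) = if i = j then 1 else 0 := by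
  rw [Basis.map_apply, apply_evalEquiv_symm_apply, b.dualBasis_apply_self]

section CliffordModule

variable {Λ V M : Type*} [CommRing Λ] [AddCommGroup V] [Module Λ V]
  [AddCommGroup M] [Module Λ M]

def CanonicalAnticommutation (ρ : ExteriorAlgebra Λ V →ₐ[Λ] End Λ M)
    (ρ' : ExteriorAlgebra Λ (Dual Λ V) →ₐ[Λ] End Λ M) : Prop :=
  ∀ (v : V) (φ : Dual Λ V) (x : M),
    ρ (ι Λ v) (ρ' (ι Λ φ) x) + ρ' (ι Λ φ) (ρ (ι Λ v) x) = φ v • x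

variable {ρ : ExteriorAlgebra Λ V →ₐ[Λ] End Λ M}
  {ρ' : ExteriorAlgebra Λ (Dual Λ V) →ₐ[Λ] End Λ M}

namespace CanonicalAnticommutation

theorem ρ_ι_ρ'_ι (h : CanonicalAnticommutation ρ ρ') (v : V) (φ : Dual Λ V) (x : M) :
    ρ (ι Λ v) (ρ' (ι Λ φ) x) = φ v • x - ρ' (ι Λ φ) (ρ (ι Λ v) x) :=
  eq_sub_of_add_eq (h v φ x)

theorem ρ'_ι_ρ_ι (h : CanonicalAnticommutation ρ ρ') (v : V) (φ : Dual Λ V) (x : M) :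
    ρ' (ι Λ φ) (ρ (ι Λ v) x) = φ v • x - ρ (ι Λ v) (ρ' (ι Λ φ) x) :=
  eq_sub_of_add_eq' (h v φ x)

theorem ρ_ι_ρ'_ιMulti_eq_zero (h : CanonicalAnticommutation ρ ρ') {v : V} {x : M}
    (hx : ρ (ι Λ v) x = 0) : ∀ {n : ℕ} (φ : Fin n → Dual Λ V), (∀ i, φ i v = 0) →
      ρ (ι Λ v) (ρ' (ιMulti Λ n φ) x) = 0
  | 0, _, _ => by rw [ιMulti_zero_apply, map_one, End.one_apply, hx]
  | n + 1, φ, hφ => by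
      rw [ιMulti_succ_apply, map_mul, End.mul_apply, h.ρ_ι_ρ'_ι, hφ, zero_smul,
        h.ρ_ι_ρ'_ιMulti_eq_zero hx (Matrix.vecTail φ) (fun i => hφ i.succ), map_zero, sub_zero]

/-- In reverse order, each `v j` meets its partner `φ j` first. -/
theorem ρ_prod_reverse_ρ'_ιMulti (h : CanonicalAnticommutation ρ ρ') :
    ∀ {n : ℕ} (v : Fin n → V) (φ : Fin n → Dual Λ V),
      (∀ i j, φ i (v j) = if i = j then 1 else 0) → ∀ {x : M}, (∀ j, ρ (ι Λ (v j)) x = 0) →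
      ρ (List.ofFn fun i => ι Λ (v i)).reverse.prod (ρ' (ιMulti Λ n φ) x) = x
  | 0, _, _, _, _, _ => by simp
  | n + 1, v, φ, hvφ, x, hx => by
      have hrest : ρ (ι Λ (v 0)) (ρ' (ιMulti Λ n (Matrix.vecTail φ)) x) = 0 :=
        h.ρ_ι_ρ'_ιMulti_eq_zero (hx 0) _ fun i => by
          simp [Matrix.vecTail, hvφ, Fin.succ_ne_zero i]
      rw [List.ofFn_succ, List.reverse_cons, List.prod_append, List.prod_singleton, map_mul,
        End.mul_apply, ιMulti_succ_apply, map_mul, End.mul_apply, h.ρ_ι_ρ'_ι, hvφ, if_pos rfl,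
        one_smul, hrest, map_zero, sub_zero]
      exact h.ρ_prod_reverse_ρ'_ιMulti (fun i => v i.succ) (Matrix.vecTail φ)
        (fun i j => by simp [Matrix.vecTail, hvφ]) fun j => hx j.succ

theorem ρ'_ι_ρ_mem_range (h : CanonicalAnticommutation ρ ρ') {x : M}
    (hx : ∀ φ, ρ' (ι Λ φ) x = 0) (φ : Dual Λ V) (r : ExteriorAlgebra Λ V) :
    ρ' (ι Λ φ) (ρ r x) ∈ LinearMap.range (ρ.toLinearMap.flip x) := by
  induction r using CliffordAlgebra.left_induction with
  | algebraMap c => simp [Algebra.algebraMap_eq_smul_one, hx]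
  | add r s hr hs => rw [map_add, LinearMap.add_apply, map_add]; exact add_mem hr hs
  | ι_mul r v hr =>
      obtain ⟨s, hs⟩ := hr
      change ρ' (ι Λ φ) (ρ (ι Λ v * r) x) ∈ _
      rw [map_mul, End.mul_apply, h.ρ'_ι_ρ_ι, ← hs]
      refine sub_mem (Submodule.smul_mem _ _ ⟨r, rfl⟩) ⟨ι Λ v * s, ?_⟩
      simp

theorem ρ'_mem_range (h : CanonicalAnticommutation ρ ρ') {x : M}
    (hx : ∀ φ, ρ' (ι Λ φ) x = 0) (s : ExteriorAlgebra Λ (Dual Λ V)) {y : M}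
    (hy : y ∈ LinearMap.range (ρ.toLinearMap.flip x)) :
    ρ' s y ∈ LinearMap.range (ρ.toLinearMap.flip x) := by
  induction s using ExteriorAlgebra.induction generalizing y with
  | algebraMap c =>
      rw [AlgHom.commutes, algebraMap_end_apply]
      exact Submodule.smul_mem _ _ hy
  | ι φ =>
      obtain ⟨r, rfl⟩ := hy
      exact h.ρ'_ι_ρ_mem_range hx φ r
  | mul a b ha hb => rw [map_mul, End.mul_apply]; exact ha (hb hy)
  | add a b ha hb => rw [map_add, LinearMap.add_apply]; exact add_mem (ha hy) (hb hy)

theorem surjective_ρ_apply (h : CanonicalAnticommutation ρ ρ') {x m : M}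
    (hx : ∀ φ, ρ' (ι Λ φ) x = 0) (hm : Function.Surjective fun s => ρ' s m)
    (hmx : m ∈ LinearMap.range (ρ.toLinearMap.flip x)) :
    Function.Surjective fun r => ρ r x := by
  intro y
  obtain ⟨s, rfl⟩ := hm y
  exact h.ρ'_mem_range hx s hmx

end CanonicalAnticommutation

end CliffordModule

theorem spectral_hecke_stmt15_general (Λ : Type) [CommRing Λ]
    (V : Type) [AddCommGroup V] [Module Λ V] [Module.Free Λ V] [Module.Finite Λ V]
    (δ : ℕ)
    (M : Type) [AddCommGroup M] [Module Λ M]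
    (ρ : ExteriorAlgebra Λ V →ₐ[Λ] Module.End Λ M)
    (ρ' : ExteriorAlgebra Λ (Module.Dual Λ V) →ₐ[Λ] Module.End Λ M)
    (hcompat : ∀ (v : V) (φ : Module.Dual Λ V) (x : M),
      ρ (ExteriorAlgebra.ι Λ v) (ρ' (ExteriorAlgebra.ι Λ φ) x) +
        ρ' (ExteriorAlgebra.ι Λ φ) (ρ (ExteriorAlgebra.ι Λ v) x) = φ v • x)
    (m₀ : M)
    (hgen : Function.Bijective
      (fun r : ExteriorAlgebra Λ (Module.Dual Λ V) => ρ' r m₀))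
    (hann : ∀ v : V, ρ (ExteriorAlgebra.ι Λ v) m₀ = 0) :
    ∀ b : Module.Basis (Fin δ) Λ (Module.Dual Λ V),
      Function.Bijective
        (fun r : ExteriorAlgebra Λ V =>
          ρ r (ρ' ((List.ofFn fun i : Fin δ => ExteriorAlgebra.ι Λ (b i)).prod) m₀)) := by
  intro b
  let e := b.dualBasis.map (evalEquiv Λ V).symm
  let ρ'm₀ := LinearEquiv.ofBijective (ρ'.toLinearMap.flip m₀) hgen
  let E := (e.ExteriorAlgebra.equiv b.ExteriorAlgebra (.refl _)).trans ρ'm₀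
  have : Module.Finite Λ (ExteriorAlgebra Λ (Dual Λ V)) := .of_basis b.ExteriorAlgebra
  have : Module.Finite Λ M := .equiv ρ'm₀
  refine OrzechProperty.bijective_of_surjective_of_injective E.toLinearMap
    (ρ.toLinearMap.flip _) E.injective ?_
  refine CanonicalAnticommutation.surjective_ρ_apply hcompat (fun φ => ?_) hgen.2
    ⟨(List.ofFn fun i => ι Λ (e i)).reverse.prod, ?_⟩
  · rw [← End.mul_apply, ← map_mul, ← ιMulti_apply,
      ι_mul_ιMulti_eq_zero_of_span_eq_top b.span_eq, map_zero, LinearMap.zero_apply]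
  · exact CanonicalAnticommutation.ρ_prod_reverse_ρ'_ιMulti hcompat e b
      b.apply_dualBasis_map_evalEquiv_symm fun j => hann (e j)

/-- let `Λ` be a commutative ring, `V` a finite free `Λ`-module with dual
`V*`, and `M` a `Λ`-module with actions `ρ` of `⋀*(V)` and `ρ'` of `⋀*(V*)` satisfying the
Clifford-type compatibility `v·v*·m + v*·v·m = ⟨v, v*⟩·m`. If `M` is free of rank one over
`⋀*(V*)` with generator `m₀` annihilated by `V`, then `M` is free of rank one over `⋀*(V)`,
generated by `(v*₁ ∧ … ∧ v*_δ)·m₀` for any basis `v*₁, …, v*_δ` of `V*`. -/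
theorem spectral_hecke_stmt15 (Λ : Type) [CommRing Λ]
    (V : Type) [AddCommGroup V] [Module Λ V] [Module.Free Λ V] [Module.Finite Λ V]
    (δ : ℕ) (hδ : Module.finrank Λ V = δ)
    (M : Type) [AddCommGroup M] [Module Λ M]
    (ρ : ExteriorAlgebra Λ V →ₐ[Λ] Module.End Λ M)
    (ρ' : ExteriorAlgebra Λ (Module.Dual Λ V) →ₐ[Λ] Module.End Λ M)
    (hcompat : ∀ (v : V) (φ : Module.Dual Λ V) (x : M),
      ρ (ExteriorAlgebra.ι Λ v) (ρ' (ExteriorAlgebra.ι Λ φ) x) +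
        ρ' (ExteriorAlgebra.ι Λ φ) (ρ (ExteriorAlgebra.ι Λ v) x) = φ v • x)
    (m₀ : M)
    (hgen : Function.Bijective
      (fun r : ExteriorAlgebra Λ (Module.Dual Λ V) => ρ' r m₀))
    (hann : ∀ v : V, ρ (ExteriorAlgebra.ι Λ v) m₀ = 0) :
    ∀ b : Module.Basis (Fin δ) Λ (Module.Dual Λ V),
      Function.Bijective
        (fun r : ExteriorAlgebra Λ V =>
          ρ r (ρ' ((List.ofFn fun i : Fin δ => ExteriorAlgebra.ι Λ (b i)).prod) m₀)) :=
  spectral_hecke_stmt15_general Λ V δ M ρ ρ' hcompat m₀ hgen hann
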